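/- arXiv:2203.09778 — 2 statements merged into one kernel-verified Lean document; each statement's English description precedes it below -/
import Mathlib

section
/- Let E be a number field (a finite extension of ℚ) acting ℚ-linearly on a finite-dimensional ℚ-vector space T, let ψ : T × T → ℚ be a non-degenerate ℚ-bilinear form, and suppose ψ(e·v, w) = ψ(v, e·w) for all e ∈ E and v, w ∈ T (totally real case). Then there exists a unique E-bilinear symmetric form φ : T × T → E such that ψ(v, w) = Tr_{E/ℚ}(φ(v, w)) for all v, w ∈ T. -/
/-! Because the trace form of `E/ℚ` is nondegenerate, a `ℚ`-linear form `g` on an `E`-space factors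
uniquely as `Tr_{E/ℚ} ∘ f` with `f` `E`-linear: `f m` is the trace-dual of `e ↦ g (e • m)`.
Applied to each `ψ v` this yields `φ v`; the relation `ψ (e • v) w = ψ v (e • w)` makes `v ↦ φ v`
`E`-linear, and uniqueness applied to the flipped form gives symmetry. -/

section TraceLift

variable {K L : Type*} [Field K] [Field L] [Algebra K L] [FiniteDimensional K L]
  [Algebra.IsSeparable K L]

theorem eq_of_forall_trace_mul_eq {x y : L}
    (h : ∀ e, Algebra.trace K L (x * e) = Algebra.trace K L (y * e)) : x = y :=
  sub_eq_zero.mp <| (traceForm_nondegenerate K L).1 _ fun e => by simp [h e]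

theorem exists_forall_trace_mul_eq (f : Module.Dual K L) :
    ∃ x : L, ∀ e, Algebra.trace K L (x * e) = f e :=
  ⟨((Algebra.traceForm K L).toDual (traceForm_nondegenerate K L)).symm f, fun e => by
    rw [← Algebra.traceForm_apply]
    exact LinearMap.BilinForm.apply_toDual_symm_apply f e⟩

variable {M : Type*} [AddCommGroup M] [Module L M]

theorem LinearMap.eq_of_forall_trace_apply_eq {f g : M →ₗ[L] L}
    (h : ∀ m, Algebra.trace K L (f m) = Algebra.trace K L (g m)) : f = g := by
  ext m
  refine eq_of_forall_trace_mul_eq (K := K) fun e => ?_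
  rw [mul_comm, ← smul_eq_mul, ← map_smul, h, map_smul, smul_eq_mul, mul_comm]

variable [Module K M] [IsScalarTower K L M]

theorem exists_linearMap_trace_apply_eq (g : M →ₗ[K] K) :
    ∃ f : M →ₗ[L] L, ∀ m, Algebra.trace K L (f m) = g m := by
  choose x hx using fun m : M =>
    exists_forall_trace_mul_eq (g ∘ₗ (LinearMap.toSpanSingleton L M m).restrictScalars K)
  simp only [LinearMap.coe_comp, LinearMap.coe_restrictScalars, Function.comp_apply,
    LinearMap.toSpanSingleton_apply] at hx
  have x_add (m m' : M) : x (m + m') = x m + x m' :=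
    eq_of_forall_trace_mul_eq (K := K) fun e => by simp [add_mul, hx]
  have x_smul (c : L) (m : M) : x (c • m) = c * x m :=
    eq_of_forall_trace_mul_eq (K := K) fun e => by
      rw [hx, mul_assoc, mul_left_comm, hx, mul_comm c e, mul_smul]
  exact ⟨{ toFun := x, map_add' := x_add, map_smul' := x_smul }, fun m => by simpa using hx m 1⟩

theorem existsUnique_bilinear_trace_eq {P : Type*} [AddCommGroup P] [Module K P] [Module L P]
    (ψ : P →ₗ[K] M →ₗ[K] K) (hψ : ∀ (c : L) p m, ψ (c • p) m = ψ p (c • m)) :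
    ∃! φ : P →ₗ[L] M →ₗ[L] L, ∀ p m, ψ p m = Algebra.trace K L (φ p m) := by
  choose lift hlift using fun p => exists_linearMap_trace_apply_eq (L := L) (ψ p)
  have lift_add (p p' : P) : lift (p + p') = lift p + lift p' :=
    LinearMap.eq_of_forall_trace_apply_eq (K := K) fun m => by simp [hlift]
  have lift_smul (c : L) (p : P) : lift (c • p) = c • lift p :=
    LinearMap.eq_of_forall_trace_apply_eq (K := K) fun m => by
      rw [hlift, hψ, LinearMap.smul_apply, ← map_smul, hlift]
  refine ⟨{ toFun := lift, map_add' := lift_add, map_smul' := lift_smul },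
    fun p m => (hlift p m).symm, fun φ' hφ' => ?_⟩
  ext p : 1
  exact LinearMap.eq_of_forall_trace_apply_eq (K := K) fun m =>
    (hφ' p m).symm.trans (hlift p m).symm

end TraceLift

theorem stmt2_general (E : Type*) [Field E] [Algebra ℚ E] [FiniteDimensional ℚ E]
    (T : Type*) [AddCommGroup T] [Module ℚ T]
    [Module E T] [IsScalarTower ℚ E T]
    (ψ : T →ₗ[ℚ] T →ₗ[ℚ] ℚ)
    (hsymm : ∀ v w : T, ψ v w = ψ w v)
    (hE : ∀ (e : E) (v w : T), ψ (e • v) w = ψ v (e • w)) :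
    ∃! φ : T →ₗ[E] T →ₗ[E] E,
      (∀ v w : T, φ v w = φ w v) ∧
      ∀ v w : T, ψ v w = Algebra.trace ℚ E (φ v w) := by
  obtain ⟨φ, hφ, huniq⟩ := existsUnique_bilinear_trace_eq ψ hE
  have hflip : φ.flip = φ := huniq φ.flip fun v w => by rw [hsymm, LinearMap.flip_apply, hφ]
  refine ⟨φ, ⟨fun v w => ?_, hφ⟩, fun φ' hφ' => huniq φ' hφ'.2⟩
  rw [← hflip, LinearMap.flip_apply, hflip]

/-- For a number field `E` acting on a finite-dimensional `ℚ`-vector space `T`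
and a non-degenerate symmetric `ℚ`-bilinear form `ψ` satisfying
`ψ(e·v, w) = ψ(v, e·w)`, there is a unique symmetric `E`-bilinear form `φ`
with `ψ = Tr_{E/ℚ} ∘ φ`. -/
theorem stmt2 (E : Type*) [Field E] [Algebra ℚ E] [FiniteDimensional ℚ E]
    (T : Type*) [AddCommGroup T] [Module ℚ T] [FiniteDimensional ℚ T]
    [Module E T] [IsScalarTower ℚ E T]
    (ψ : T →ₗ[ℚ] T →ₗ[ℚ] ℚ)
    (hsymm : ∀ v w : T, ψ v w = ψ w v)
    (hnd : ∀ v : T, (∀ w : T, ψ v w = 0) → v = 0)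
    (hE : ∀ (e : E) (v w : T), ψ (e • v) w = ψ v (e • w)) :
    ∃! φ : T →ₗ[E] T →ₗ[E] E,
      (∀ v w : T, φ v w = φ w v) ∧
      ∀ v w : T, ψ v w = Algebra.trace ℚ E (φ v w) :=
  stmt2_general E T ψ hsymm hE
end

section
/- Let Y be a finite-dimensional complex vector space and r, s non-negative integers. The space of GL(Y)-invariant linear maps Y^{⊗r} ⊗ (Y^*)^{⊗s} → ℂ is zero unless r = s, and when r = s it is spanned by the complete contractions: for each permutation σ ∈ S_r, the map sending v_1 ⊗ ⋯ ⊗ v_r ⊗ μ_1 ⊗ ⋯ ⊗ μ_r to ∏_i μ_i(v_{σ(i)}). -/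
/-!
Invariance under `GL(Y)` extends to the balance condition `f (A•x ⊗ w) = f (x ⊗ Aᵀ•w)` for every
endomorphism `A`: both sides are polynomial in `t` along the line `t • 1 + A`, and they agree
whenever `t` avoids the finite spectrum of `-A`. Taking `A = 2` forces `f = 0` unless `r = s`.

For `r = s`, write `f (x ⊗ w) = ⟨T x, w⟩` with `T ∈ End (Y^{⊗r})`; balance says that `T` commutes
with every `A^{⊗r}`. By polarization these span the commutant of the permutation action of `S_r`,
so `T` lies in the bicommutant of `S_r`, which by Maschke's theorem and Jacobson density is spanned
by the permutations themselves. The permutation `σ` contributes the contraction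
`∏ μ_i (v_{σ⁻¹ i})`.
-/

open Module Finset PiTensorProduct
open scoped TensorProduct

theorem Finset.sum_superset_neg_one_pow_card_compl {ι : Type*} [Fintype ι] [DecidableEq ι]
    (T : Finset ι) :
    ∑ S with T ⊆ S, (-1 : ℤ) ^ (Fintype.card ι - #S) = if T = univ then 1 else 0 := by
  have hcompl : ∑ S with T ⊆ S, (-1 : ℤ) ^ (Fintype.card ι - #S) = ∑ U ∈ Tᶜ.powerset, (-1) ^ #U :=
    sum_nbij' compl compl (by simp) (by simp [subset_compl_comm])
      (by simp) (by simp) (by simp [card_compl])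
  simp [hcompl, sum_powerset_neg_one_pow_card]

theorem MultilinearMap.sum_perm_eq_polarization {R ι W Z : Type*} [Semiring R] [Fintype ι]
    [DecidableEq ι] [AddCommMonoid W] [Module R W] [AddCommGroup Z] [Module R Z]
    (G : MultilinearMap R (fun _ : ι => W) Z) (B : ι → W) :
    ∑ σ : Equiv.Perm ι, G (B ∘ σ) =
      ∑ S : Finset ι, (-1 : ℤ) ^ (Fintype.card ι - #S) • G (fun _ => ∑ i ∈ S, B i) := by
  have hsurj : ∑ σ : Equiv.Perm ι, G (B ∘ σ) = ∑ φ : ι → ι with univ.image φ = univ, G (B ∘ φ) :=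
    sum_bij (fun σ _ => σ)
      (fun σ _ => by simpa [eq_univ_iff_forall, Function.Surjective] using σ.surjective)
      (fun _ _ _ _ h => DFunLike.coe_injective h)
      (fun φ hφ => ⟨Equiv.ofBijective φ <| Finite.surjective_iff_bijective.mp <| by
        simpa [eq_univ_iff_forall, Function.Surjective] using hφ, mem_univ _, rfl⟩)
      (fun _ _ => rfl)
  calc ∑ σ : Equiv.Perm ι, G (B ∘ σ)
      = ∑ φ : ι → ι, ∑ S with univ.image φ ⊆ S, (-1 : ℤ) ^ (Fintype.card ι - #S) • G (B ∘ φ) := by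
        simp_rw [hsurj, ← sum_smul, sum_superset_neg_one_pow_card_compl, ite_smul, one_smul,
          zero_smul, sum_ite, sum_const_zero, add_zero]
    _ = ∑ S : Finset ι, ∑ φ ∈ Fintype.piFinset fun _ => S,
          (-1 : ℤ) ^ (Fintype.card ι - #S) • G (B ∘ φ) :=
        (sum_comm' fun S φ => by simp [Fintype.mem_piFinset, image_subset_iff]).symm
    _ = _ := by simp_rw [G.map_sum_finset (fun _ => B) fun _ => _, smul_sum]; rfl

open Polynomial in
theorem MultilinearMap.exists_polynomial_eval_smul_add {K M ι : Type*} [CommSemiring K] [Fintype ι]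
    [AddCommMonoid M] [Module K M] (G : MultilinearMap K (fun _ : ι => M) K) (x y : M) :
    ∃ p : K[X], ∀ t, p.eval t = G (fun _ => t • x + y) := by
  classical
  refine ⟨∑ S : Finset ι, C (G (S.piecewise (fun _ => x) fun _ => y)) * X ^ #S, fun t => ?_⟩
  have hS : ∀ S : Finset ι, G (S.piecewise (fun _ => t • x) fun _ => y) =
      t ^ #S * G (S.piecewise (fun _ => x) fun _ => y) := fun S => by
    convert G.map_piecewise_smul (fun _ => t) (S.piecewise (fun _ => x) fun _ => y) S using 2
    · ext i; by_cases hi : i ∈ S <;> simp [hi]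
    · simp
  rw [show (fun _ => t • x + y) = (fun _ => t • x) + fun _ => y from rfl, G.map_add_univ]
  simp only [eval_finsetSum, eval_mul, eval_C, eval_pow, eval_X, hS, mul_comm]

open Polynomial in
theorem MultilinearMap.apply_const_eq_of_forall_isUnit {K Y ι κ : Type*} [Field K] [Infinite K]
    [AddCommGroup Y] [Module K Y] [FiniteDimensional K Y] [Fintype ι] [Fintype κ]
    (G : MultilinearMap K (fun _ : ι => End K Y) K) (H : MultilinearMap K (fun _ : κ => End K Y) K)
    (hGH : ∀ g : End K Y, IsUnit g → G (fun _ => g) = H (fun _ => g)) (A : End K Y) :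
    G (fun _ => A) = H (fun _ => A) := by
  obtain ⟨p, hp⟩ := G.exists_polynomial_eval_smul_add 1 A
  obtain ⟨q, hq⟩ := H.exists_polynomial_eval_smul_add 1 A
  -- `t • 1 + A` is invertible for all `t` off the finite spectrum of `-A`
  have hroots : (spectrum K (-A))ᶜ ⊆ {t | (p - q).IsRoot t} := fun t ht => by
    have hunit : IsUnit (t • 1 + A) := by
      simpa [spectrum.notMem_iff, Algebra.algebraMap_eq_smul_one] using ht
    simp [hp, hq, hGH _ hunit]
  have hpq : p = q := sub_eq_zero.mp <| eq_zero_of_infinite_isRoot _ <|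
    ((Module.End.finite_spectrum _).infinite_compl).mono hroots
  simpa [hp, hq] using congrArg (eval 0) hpq

theorem Representation.mem_span_range_of_forall_commute {K G V : Type*} [Field K] [Group G]
    [Finite G] [NeZero (Nat.card G : K)] [AddCommGroup V] [Module K V] [FiniteDimensional K V]
    (ρ : Representation K G V) {T : End K V}
    (hT : ∀ φ : End K V, (∀ g, Commute (ρ g) φ) → Commute T φ) :
    T ∈ Submodule.span K (Set.range ρ) := by
  classical
  -- `ρ.asModule` is a semisimple `K[G]`-module by Maschke's theorem, so Jacobson density applies
  let e := ρ.asModuleEquiv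
  let T' : End (End (MonoidAlgebra K G) ρ.asModule) ρ.asModule :=
    { toFun := fun m => e.symm (T (e m))
      map_add' := by simp
      map_smul' := fun φ m => by
        let φ' : End K V := e.toLinearMap ∘ₗ φ.restrictScalars K ∘ₗ e.symm.toLinearMap
        have hφ' : ∀ g, Commute (ρ g) φ' := fun g => LinearMap.ext fun x => by
          simp only [φ', e, Module.End.mul_apply, LinearMap.coe_comp, Function.comp_apply,
            LinearEquiv.coe_coe, LinearMap.coe_restrictScalars, map_smul,
            Representation.asModuleEquiv_symm_map_rho, Representation.asModuleEquiv_map_smul,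
            Representation.asAlgebraHom_of]
        simpa [φ'] using congrArg e.symm (LinearMap.congr_fun (hT φ' hφ').eq (e m)) }
  obtain ⟨a, hTa⟩ := jacobson_density T' (univ.image (e.symm ∘ finBasis K V))
  replace hTa : T = ρ.asAlgebraHom a := (finBasis K V).ext fun i => by
    simpa [T', e] using congrArg e (hTa _ (mem_image_of_mem _ (mem_univ i)))
  rw [hTa]
  clear hTa
  induction a using MonoidAlgebra.induction_linear with
  | zero => simp
  | add a b ha hb => rw [map_add]; exact Submodule.add_mem _ ha hb
  | single g c =>
    rw [Representation.asAlgebraHom_single]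
    exact Submodule.smul_mem _ _ (Submodule.subset_span ⟨g, rfl⟩)

namespace PiTensorProduct

theorem dualDistrib_map_dualMap {R : Type*} [CommSemiring R] {ι : Type*} [Fintype ι]
    {M N : ι → Type*} [∀ i, AddCommMonoid (M i)] [∀ i, Module R (M i)]
    [∀ i, AddCommMonoid (N i)] [∀ i, Module R (N i)] (f : ∀ i, M i →ₗ[R] N i)
    (w : ⨂[R] i, Dual R (N i)) :
    dualDistrib (map (fun i => (f i).dualMap) w) = dualDistrib w ∘ₗ map f := by
  induction w using PiTensorProduct.induction_on with
  | smul_tprod c μ => ext v; simp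
  | add w w' hw hw' => simp [hw, hw', LinearMap.add_comp]

section Perm

variable (K Y ι : Type*) [CommSemiring K] [AddCommMonoid Y] [Module K Y]

noncomputable def permRep : Representation K (Equiv.Perm ι) (⨂[K] _ : ι, Y) where
  toFun σ := (reindex K (fun _ => Y) σ).toLinearMap
  map_one' := by simp [Equiv.Perm.one_def, Module.End.one_eq_id]
  map_mul' σ τ := by
    rw [Equiv.Perm.mul_def, ← reindex_trans]
    rfl

variable {K Y ι}

@[simp]
theorem permRep_tprod (σ : Equiv.Perm ι) (v : ι → Y) :
    permRep K Y ι σ (tprod K v) = tprod K (v ∘ σ.symm) :=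
  reindex_tprod σ v

theorem permRep_mul_map (σ : Equiv.Perm ι) (B : ι → End K Y) :
    permRep K Y ι σ * map B = map (B ∘ σ.symm) * permRep K Y ι σ :=
  (map_comp_reindex_eq B σ).symm

end Perm

section SchurWeyl

variable {K Y ι : Type*} [Field K] [AddCommGroup Y] [Module K Y] [FiniteDimensional K Y]
  [Fintype ι] [DecidableEq ι]

theorem span_range_map_eq_top :
    Submodule.span K (Set.range (map : (ι → End K Y) → End K (⨂[K] _ : ι, Y))) = ⊤ := by
  let b := Module.finBasis K Y
  let P := Basis.piTensorProduct fun _ : ι => b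
  refine eq_top_mono (Submodule.span_mono ?_) (P.linearMap P).span_eq
  rintro _ ⟨⟨p, q⟩, rfl⟩
  refine ⟨fun i => b.linearMap b (p i, q i), P.ext fun k => ?_⟩
  rw [Basis.linearMap_apply_apply]
  simp only [P, Basis.piTensorProduct_apply, map_tprod]
  split_ifs with hqk
  · simp [hqk, Basis.linearMap_apply_apply]
  · obtain ⟨i, hi⟩ := Function.ne_iff.mp hqk
    exact MultilinearMap.map_coord_zero _ i (by simp [Basis.linearMap_apply_apply, hi])

theorem mem_span_map_const_of_forall_commute [NeZero (Nat.card (Equiv.Perm ι) : K)]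
    {φ : End K (⨂[K] _ : ι, Y)} (hφ : ∀ σ, Commute (permRep K Y ι σ) φ) :
    φ ∈ Submodule.span K (Set.range fun A : End K Y => map fun _ : ι => A) := by
  -- averaging over conjugation by permutations fixes `φ` and symmetrizes each `map B`
  let avg : End K (End K (⨂[K] _ : ι, Y)) :=
    ∑ σ, LinearMap.mulLeft K (permRep K Y ι σ) ∘ₗ LinearMap.mulRight K (permRep K Y ι σ⁻¹)
  have havg_apply : ∀ ψ, avg ψ = ∑ σ, permRep K Y ι σ * ψ * permRep K Y ι σ⁻¹ := fun ψ => by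
    simp [avg, mul_assoc]
  have havg_φ : avg φ = (Nat.card (Equiv.Perm ι) : K) • φ := by
    simp_rw [havg_apply, (hφ _).eq, mul_assoc, ← map_mul, mul_inv_cancel, map_one, mul_one,
      sum_const, card_univ, Nat.card_eq_fintype_card, Nat.cast_smul_eq_nsmul]
  have havg_map : ∀ B, avg (map B) ∈
      Submodule.span K (Set.range fun A : End K Y => map fun _ : ι => A) := fun B => by
    have hsym : avg (map B) = ∑ σ : Equiv.Perm ι, map (B ∘ σ) := by
      simp only [havg_apply, permRep_mul_map, mul_assoc, ← map_mul, mul_inv_cancel, map_one,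
        mul_one]
      exact Fintype.sum_equiv (Equiv.inv _) _ _ fun _ => rfl
    have hpol := (mapMultilinear K (fun _ : ι => Y) fun _ => Y).sum_perm_eq_polarization B
    rw [hsym, show ∑ σ : Equiv.Perm ι, map (B ∘ σ) = _ from hpol]
    exact Submodule.sum_mem _ fun S _ => Submodule.smul_mem _ _ (Submodule.subset_span ⟨_, rfl⟩)
  have : avg φ ∈ Submodule.span K (Set.range fun A : End K Y => map fun _ : ι => A) := by
    have hle : Submodule.span K (Set.range map) ≤
        (Submodule.span K (Set.range fun A : End K Y => map fun _ : ι => A)).comap avg :=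
      Submodule.span_le.mpr <| Set.range_subset_iff.mpr havg_map
    exact hle (span_range_map_eq_top (K := K) (Y := Y) (ι := ι) ▸ Submodule.mem_top)
  rw [havg_φ] at this
  exact (Submodule.smul_mem_iff _ (NeZero.ne _)).mp this

theorem mem_span_permRep_of_forall_commute [NeZero (Nat.card (Equiv.Perm ι) : K)]
    {T : End K (⨂[K] _ : ι, Y)} (hT : ∀ A : End K Y, Commute T (map fun _ : ι => A)) :
    T ∈ Submodule.span K (Set.range (permRep K Y ι)) :=
  (permRep K Y ι).mem_span_range_of_forall_commute fun φ hφ => by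
    have hle : Submodule.span K (Set.range fun A : End K Y => map fun _ : ι => A) ≤
        Subalgebra.toSubmodule (Subalgebra.centralizer K {T}) :=
      Submodule.span_le.mpr <| by
        rintro _ ⟨A, rfl⟩
        simpa only [SetLike.mem_coe, Subalgebra.mem_toSubmodule, Subalgebra.mem_centralizer_iff,
          Set.mem_singleton_iff, forall_eq] using (hT A).eq
    show T * φ = φ * T
    simpa only [Subalgebra.mem_toSubmodule, Subalgebra.mem_centralizer_iff,
      Set.mem_singleton_iff, forall_eq] using hle (mem_span_map_const_of_forall_commute hφ)

end SchurWeyl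

end PiTensorProduct

noncomputable def endEquivDualTensor {K V W : Type*} [CommSemiring K] [AddCommMonoid V]
    [Module K V] [IsReflexive K V] [AddCommMonoid W] [Module K W] (e : W ≃ₗ[K] Dual K V) :
    End K V ≃ₗ[K] Dual K (V ⊗[K] W) :=
  (LinearEquiv.congrRight ((evalEquiv K V).trans e.dualMap)).trans
    (TensorProduct.lift.equiv (RingHom.id K) V W K)

@[simp]
theorem endEquivDualTensor_tmul {K V W : Type*} [CommSemiring K] [AddCommMonoid V] [Module K V]
    [IsReflexive K V] [AddCommMonoid W] [Module K W] (e : W ≃ₗ[K] Dual K V) (T : End K V)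
    (x : V) (w : W) : endEquivDualTensor e T (x ⊗ₜ w) = e w (T x) :=
  rfl

section Invariants

variable (K Y ι κ : Type*) [Field K] [AddCommGroup Y] [Module K Y]

def glInvariants : Submodule K ((⨂[K] _ : ι, Y) ⊗[K] (⨂[K] _ : κ, Dual K Y) →ₗ[K] K) where
  carrier := {f | ∀ (g : Y ≃ₗ[K] Y) (v : ι → Y) (μ : κ → Dual K Y),
    f ((tprod K fun i => g (v i)) ⊗ₜ (tprod K fun i => (μ i).comp g.symm.toLinearMap)) =
      f ((tprod K v) ⊗ₜ (tprod K μ))}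
  add_mem' hf hg g v μ := by simp [hf g v μ, hg g v μ]
  zero_mem' := by simp
  smul_mem' c f hf g v μ := by simp [hf g v μ]

variable {K Y ι κ}

theorem comp_map_eq_of_mem_glInvariants [Infinite K] [FiniteDimensional K Y] [Fintype ι]
    [Fintype κ] {f} (hf : f ∈ glInvariants K Y ι κ) (A : End K Y) :
    f ∘ₗ TensorProduct.map (map fun _ => A) LinearMap.id =
      f ∘ₗ TensorProduct.map LinearMap.id (map fun _ => A.dualMap) := by
  ext v μ
  let G : MultilinearMap K (fun _ : ι => End K Y) K :=
    (f ∘ₗ (TensorProduct.mk K _ _).flip (tprod K μ)).compMultilinearMap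
      ((PiTensorProduct.tprod K).compLinearMap fun i => LinearMap.applyₗ (v i))
  let H : MultilinearMap K (fun _ : κ => End K Y) K :=
    (f ∘ₗ TensorProduct.mk K _ _ (tprod K v)).compMultilinearMap
      ((PiTensorProduct.tprod K).compLinearMap fun i => LinearMap.llcomp K Y Y K (μ i))
  have hGH : ∀ g : End K Y, IsUnit g → G (fun _ => g) = H (fun _ => g) := fun g hg => by
    obtain ⟨g, rfl⟩ : ∃ g' : Y ≃ₗ[K] Y, g'.toLinearMap = g :=
      ⟨.ofBijective g ((Module.End.isUnit_iff g).mp hg), rfl⟩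
    have hμ : ∀ i, ((μ i).comp g.toLinearMap).comp g.symm.toLinearMap = μ i := fun i => by
      ext y; simp
    simpa [G, H, hμ, LinearMap.llcomp_apply'] using hf g v fun i => (μ i).comp g.toLinearMap
  simpa [G, H, LinearMap.dualMap_apply', LinearMap.llcomp_apply'] using
    G.apply_const_eq_of_forall_isUnit H hGH A

theorem eq_zero_of_mem_glInvariants [CharZero K] [FiniteDimensional K Y] [Fintype ι] [Fintype κ]
    {f} (hf : f ∈ glInvariants K Y ι κ) (hcard : Fintype.card ι ≠ Fintype.card κ) : f = 0 := by
  ext v μ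
  -- the scalar `2` acts on the two sides with the weights `2 ^ card ι` and `2 ^ card κ`
  have hscale := LinearMap.congr_fun (comp_map_eq_of_mem_glInvariants hf ((2 : K) • 1))
    (tprod K v ⊗ₜ tprod K μ)
  have hpow : (2 : K) ^ Fintype.card ι ≠ 2 ^ Fintype.card κ := by
    exact_mod_cast (Nat.pow_right_injective le_rfl).ne hcard
  simp only [LinearMap.comp_apply, TensorProduct.map_tmul, map_tprod, LinearMap.id_apply,
    LinearMap.dualMap_apply', LinearMap.comp_smul, Module.End.one_eq_id, LinearMap.comp_id,
    LinearMap.smul_apply, LinearMap.id_apply, MultilinearMap.map_smul_univ, prod_const,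
    card_univ, ← TensorProduct.smul_tmul', TensorProduct.tmul_smul, map_smul, smul_eq_mul] at hscale
  show f (tprod K v ⊗ₜ tprod K μ) = 0
  have hzero :
      ((2 : K) ^ Fintype.card ι - 2 ^ Fintype.card κ) * f (tprod K v ⊗ₜ tprod K μ) = 0 := by
    rw [sub_mul, hscale, sub_self]
  exact (mul_eq_zero.mp hzero).resolve_left (sub_ne_zero.mpr hpow)

theorem mem_span_contractions_of_mem_glInvariants [CharZero K] [FiniteDimensional K Y]
    [Fintype ι] [DecidableEq ι] {f} (hf : f ∈ glInvariants K Y ι ι) :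
    f ∈ Submodule.span K {c | ∃ σ : ι ≃ ι, ∀ (v : ι → Y) (μ : ι → Dual K Y),
      c (tprod K v ⊗ₜ tprod K μ) = ∏ i, μ i (v (σ i))} := by
  let Φ := endEquivDualTensor (dualDistribEquiv (R := K) (M := fun _ : ι => Y))
  have hΦ : ∀ T x w, Φ T (x ⊗ₜ w) = dualDistrib w (T x) := endEquivDualTensor_tmul _
  have hT : ∀ x w, f (x ⊗ₜ w) = dualDistrib w (Φ.symm f x) := fun x w => by
    rw [← hΦ, Φ.apply_symm_apply]
  have hcomm : ∀ A : End K Y, Commute (Φ.symm f) (map fun _ => A) := fun A =>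
    Φ.injective <| TensorProduct.ext' fun x w => by
      have := LinearMap.congr_fun (comp_map_eq_of_mem_glInvariants hf A) (x ⊗ₜ w)
      rw [hΦ, hΦ, Module.End.mul_apply, Module.End.mul_apply, ← hT,
        ← LinearMap.comp_apply (dualDistrib w), ← dualDistrib_map_dualMap, ← hT]
      simpa using this
  have hf_mem : f ∈ (Submodule.span K (Set.range (permRep K Y ι))).map Φ.toLinearMap :=
    ⟨_, mem_span_permRep_of_forall_commute hcomm, Φ.apply_symm_apply f⟩
  rw [Submodule.map_span] at hf_mem
  refine Submodule.span_mono ?_ hf_mem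
  rintro _ ⟨_, ⟨σ, rfl⟩, rfl⟩
  exact ⟨σ.symm, fun v μ => by simp [hΦ]⟩

theorem mem_glInvariants_of_forall_tprod_tmul [Fintype κ] {σ : κ ≃ ι} {c}
    (hc : ∀ (v : ι → Y) (μ : κ → Dual K Y), c (tprod K v ⊗ₜ tprod K μ) = ∏ i, μ i (v (σ i))) :
    c ∈ glInvariants K Y ι κ := fun g v μ => by
  simp [hc]

end Invariants

/-- First fundamental theorem of invariant theory for `GL(Y)`: the space of
`GL(Y)`-invariant linear functionals on `Y^{⊗r} ⊗ (Y^*)^{⊗s}` is zero unless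
`r = s`, in which case it is spanned by the complete contractions
`v ⊗ μ ↦ ∏ᵢ μᵢ(v_{σ(i)})` for permutations `σ`. -/
theorem stmt8 (Y : Type*) [AddCommGroup Y] [Module ℂ Y] [FiniteDimensional ℂ Y]
    (r s : ℕ) :
    {f : (PiTensorProduct ℂ (fun _ : Fin r => Y)) ⊗[ℂ]
          (PiTensorProduct ℂ (fun _ : Fin s => Module.Dual ℂ Y)) →ₗ[ℂ] ℂ |
      ∀ (g : Y ≃ₗ[ℂ] Y) (v : Fin r → Y) (μ : Fin s → Module.Dual ℂ Y),
        f ((tprod ℂ fun i => g (v i)) ⊗ₜ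
            (tprod ℂ fun i => (μ i).comp g.symm.toLinearMap))
          = f ((tprod ℂ v) ⊗ₜ (tprod ℂ μ))}
    = ↑(Submodule.span ℂ
        {c : (PiTensorProduct ℂ (fun _ : Fin r => Y)) ⊗[ℂ]
              (PiTensorProduct ℂ (fun _ : Fin s => Module.Dual ℂ Y)) →ₗ[ℂ] ℂ |
          ∃ σ : Fin s ≃ Fin r,
            ∀ (v : Fin r → Y) (μ : Fin s → Module.Dual ℂ Y),
              c ((tprod ℂ v) ⊗ₜ (tprod ℂ μ)) = ∏ i : Fin s, μ i (v (σ i))}) := by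
  refine Set.Subset.antisymm (fun f hf => ?_) ?_
  · rcases eq_or_ne r s with rfl | hrs
    · exact mem_span_contractions_of_mem_glInvariants hf
    · rw [eq_zero_of_mem_glInvariants hf (by simpa using hrs)]
      exact zero_mem _
  · exact (Submodule.span_le (p := glInvariants ℂ Y (Fin r) (Fin s))).mpr
      fun c ⟨_, hc⟩ => mem_glInvariants_of_forall_tprod_tmul hc
end
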